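/- Let A be an M×M real matrix with eᵀA = 0, let v ∈ ℝ^M be a vector with eᵀv ≠ 0, and suppose that both the M×M matrix A + v eᵀ and the (M−1)×(M−1) matrix J A H are invertible. Then the two explicit expressions for the stationary distribution coincide: (A + v eᵀ)^{-1} v = (I_M − H (J A H)^{-1} J A) e_M. -/

import Mathlib

/-!
`P = 1 - H (J A H)⁻¹ J A` satisfies `J A P = 0`, and `eᵀ A P = 0` since `eᵀ A = 0`; as a vector
annihilated by `J` and by `eᵀ` vanishes, `A P = 0`. Moreover `eᵀ P = eᵀ` because `eᵀ H = 0`.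
Hence `w = P e_M` has `A w = 0` and `eᵀ w = 1`, so `(A + v eᵀ) w = v`.
-/

open Matrix

/-- The all-but-last-row identity matrix `J` (size `(M-1) × M`). -/
noncomputable def J (M : ℕ) : Matrix (Fin (M - 1)) (Fin M) ℝ :=
  Matrix.of fun i j => if (i : ℕ) = (j : ℕ) then 1 else 0

/-- The matrix `H` (size `M × (M-1)`): identity on top, last row all `-1`. -/
noncomputable def H (M : ℕ) : Matrix (Fin M) (Fin (M - 1)) ℝ :=
  Matrix.of fun i j => if (i : ℕ) = (j : ℕ) then 1 else if (i : ℕ) = M - 1 then -1 else 0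

/-- The all-ones vector `e = (1,...,1)ᵀ`. -/
noncomputable def eVec (M : ℕ) : Fin M → ℝ := fun _ => 1

/-- The unit vector `e_M = (0,...,0,1)ᵀ`. -/
noncomputable def eM (M : ℕ) : Fin M → ℝ := fun i => if (i : ℕ) = M - 1 then 1 else 0

namespace Matrix

variable {m n R : Type*} [Fintype m] [Fintype n] [DecidableEq n] [CommRing R]

theorem inv_add_vecMulVec_mulVec_eq {A : Matrix n n R} {v e w : n → R}
    (hB : IsUnit (A + vecMulVec v e)) (hAw : A *ᵥ w = 0) (hew : e ⬝ᵥ w = 1) :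
    (A + vecMulVec v e)⁻¹ *ᵥ v = w := by
  have := hB.invertible
  refine inv_mulVec_eq_vec ?_
  rw [add_mulVec, hAw, vecMulVec_mulVec, hew]
  simp

theorem mul_one_sub_mul_inv_mul_eq_zero [DecidableEq m] (J : Matrix m n R) (A : Matrix n n R)
    (H : Matrix n m R) (hK : IsUnit (J * A * H)) :
    J * A * (1 - H * (J * A * H)⁻¹ * (J * A)) = 0 := by
  rw [Matrix.mul_sub, Matrix.mul_one, ← Matrix.mul_assoc (J * A), ← Matrix.mul_assoc (J * A),
    mul_nonsing_inv _ ((isUnit_iff_isUnit_det _).mp hK), Matrix.one_mul, sub_self]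

theorem vecMul_one_sub_mul_of_vecMul_eq_zero {e : n → R} {H : Matrix n m R}
    (heH : e ᵥ* H = 0) (X : Matrix m n R) : e ᵥ* (1 - H * X) = e := by
  rw [vecMul_sub, vecMul_one, ← vecMul_vecMul, heH, zero_vecMul, sub_zero]

end Matrix

theorem J_mulVec_apply {M : ℕ} (x : Fin M → ℝ) (i : Fin (M - 1)) :
    (_root_.J M *ᵥ x) i = x ⟨i, by omega⟩ := by
  rw [mulVec, dotProduct, Finset.sum_eq_single ⟨i, by omega⟩]
  · simp [_root_.J]
  · intro j _ hj
    have hij : (i : ℕ) ≠ j := fun h => hj (Fin.ext h.symm)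
    simp [_root_.J, hij]
  · simp

theorem eq_zero_of_J_mulVec_eq_zero {M : ℕ} {x : Fin M → ℝ} (hJ : _root_.J M *ᵥ x = 0)
    (he : eVec M ⬝ᵥ x = 0) : x = 0 := by
  have hx_init : ∀ i : Fin M, (i : ℕ) < M - 1 → x i = 0 := fun i hi => by
    simpa [J_mulVec_apply] using congrFun hJ ⟨i, hi⟩
  funext i
  by_cases hi : (i : ℕ) < M - 1
  · exact hx_init i hi
  · rw [dotProduct, Finset.sum_eq_single i] at he
    · simpa [eVec] using he
    · intro j _ hj
      rw [hx_init j (by omega)]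
      simp
    · simp

theorem eVec_vecMul_H (M : ℕ) : eVec M ᵥ* H M = 0 := by
  funext j
  have hj := j.isLt
  rw [vecMul, dotProduct, Finset.sum_eq_add_of_mem ⟨j, by omega⟩ ⟨M - 1, by omega⟩
    (Finset.mem_univ _) (Finset.mem_univ _) (by simp only [ne_eq, Fin.ext_iff]; omega)]
  · simp [H, eVec, hj.ne']
  · intro i _ hi
    simp only [ne_eq, Fin.ext_iff] at hi
    simp [H, hi.1, hi.2]

theorem eVec_dotProduct_eM {M : ℕ} (hM : 0 < M) : eVec M ⬝ᵥ eM M = 1 := by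
  rw [dotProduct, Finset.sum_eq_single ⟨M - 1, by omega⟩] <;> simp [eVec, eM, Fin.ext_iff]

theorem stmt7_general (M : ℕ) (A : Matrix (Fin M) (Fin M) ℝ)
    (hA : eVec M ᵥ* A = 0)
    (v : Fin M → ℝ)
    (hinv1 : IsUnit (A + Matrix.vecMulVec v (eVec M)))
    (hinv2 : IsUnit (J M * A * H M)) :
    (A + Matrix.vecMulVec v (eVec M))⁻¹ *ᵥ v =
      (1 - H M * (J M * A * H M)⁻¹ * (J M * A)) *ᵥ eM M := by
  obtain rfl | hM := M.eq_zero_or_pos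
  · exact Subsingleton.elim _ _
  have hJAP : J M * A * (1 - H M * (J M * A * H M)⁻¹ * (J M * A)) = 0 :=
    mul_one_sub_mul_inv_mul_eq_zero _ _ _ hinv2
  have heP : eVec M ᵥ* (1 - H M * (J M * A * H M)⁻¹ * (J M * A)) = eVec M := by
    rw [Matrix.mul_assoc (H M)]
    exact vecMul_one_sub_mul_of_vecMul_eq_zero (eVec_vecMul_H M) _
  refine inv_add_vecMulVec_mulVec_eq hinv1 (eq_zero_of_J_mulVec_eq_zero ?_ ?_) ?_
  · rw [mulVec_mulVec, mulVec_mulVec, hJAP, zero_mulVec]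
  · rw [dotProduct_mulVec, hA, zero_dotProduct]
  · rw [dotProduct_mulVec, heP, eVec_dotProduct_eM hM]

theorem stmt7 (M : ℕ) (hM : 2 ≤ M) (A : Matrix (Fin M) (Fin M) ℝ)
    (hA : eVec M ᵥ* A = 0)
    (v : Fin M → ℝ) (hv : eVec M ⬝ᵥ v ≠ 0)
    (hinv1 : IsUnit (A + Matrix.vecMulVec v (eVec M)))
    (hinv2 : IsUnit (J M * A * H M)) :
    (A + Matrix.vecMulVec v (eVec M))⁻¹ *ᵥ v =
      (1 - H M * (J M * A * H M)⁻¹ * (J M * A)) *ᵥ eM M :=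
  stmt7_general M A hA v hinv1 hinv2
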